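/- arXiv:math/0406299 — 5 statements merged into one kernel-verified Lean document; each statement's English description precedes it below -/
import Mathlib

section
/- Let 𝔫 be a finite-dimensional real Lie algebra of compact type. If Q : 𝔫 → End(𝔫) is a linear map such that Q(a) is a derivation of 𝔫 for every a ∈ 𝔫, and Q is torsion-free in the sense that Q(a)b − Q(b)a = [a,b] for all a,b ∈ 𝔫, then Q(a) = (1/2)·ad(a) for all a ∈ 𝔫. (In other words, the 0-part of the normal conformal Cartan connection of a bi-invariant metric is the only torsion-free linear map from 𝔫 into the derivations of 𝔫.) -/
open LieAlgebra LinearMap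

/-- A derivation is skew with respect to the Killing form. -/
lemma deriv_killing_skew (𝔫 : Type*) [LieRing 𝔫] [LieAlgebra ℝ 𝔫] [Module.Finite ℝ 𝔫]
    (D : Module.End ℝ 𝔫) (hD : ∀ x y : 𝔫, D ⁅x, y⁆ = ⁅D x, y⁆ + ⁅x, D y⁆) (x y : 𝔫) :
    killingForm ℝ 𝔫 (D x) y = - killingForm ℝ 𝔫 x (D y) := by
  have had : ∀ z : 𝔫, ad ℝ 𝔫 (D z) = D * ad ℝ 𝔫 z - ad ℝ 𝔫 z * D := by
    intro z; ext w
    simp only [LieAlgebra.ad_apply, LinearMap.sub_apply, Module.End.mul_apply,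
      LieAlgebra.ad_apply]
    rw [hD z w]; abel
  rw [killingForm_apply_apply, killingForm_apply_apply, had x, had y]
  have h1 : (D * ad ℝ 𝔫 x - ad ℝ 𝔫 x * D) ∘ₗ ad ℝ 𝔫 y
      = D * (ad ℝ 𝔫 x * ad ℝ 𝔫 y) - ad ℝ 𝔫 x * (D * ad ℝ 𝔫 y) := by
    show (D * ad ℝ 𝔫 x - ad ℝ 𝔫 x * D) * ad ℝ 𝔫 y = _; noncomm_ring
  have h2 : ad ℝ 𝔫 x ∘ₗ (D * ad ℝ 𝔫 y - ad ℝ 𝔫 y * D)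
      = ad ℝ 𝔫 x * (D * ad ℝ 𝔫 y) - (ad ℝ 𝔫 x * ad ℝ 𝔫 y) * D := by
    show ad ℝ 𝔫 x * (D * ad ℝ 𝔫 y - ad ℝ 𝔫 y * D) = _; noncomm_ring
  rw [h1, h2, map_sub, map_sub, LinearMap.trace_mul_comm ℝ D (ad ℝ 𝔫 x * ad ℝ 𝔫 y)]
  abel

/-- Let `𝔫` be a finite-dimensional real Lie algebra of compact type
(i.e. its Killing form is negative definite). If `Q : 𝔫 → End(𝔫)` is a linear map such
that `Q a` is a derivation of `𝔫` for every `a`, and `Q` is torsion-free in the sense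
that `Q a b - Q b a = ⁅a, b⁆` for all `a b`, then `Q a = (1/2) • ad a` for all `a`. -/
theorem biinvariant_normal_zero_part_unique
    (𝔫 : Type*) [LieRing 𝔫] [LieAlgebra ℝ 𝔫] [Module.Finite ℝ 𝔫]
    (hB : ∀ x : 𝔫, x ≠ 0 → killingForm ℝ 𝔫 x x < 0)
    (Q : 𝔫 →ₗ[ℝ] Module.End ℝ 𝔫)
    (hder : ∀ a x y : 𝔫, Q a ⁅x, y⁆ = ⁅Q a x, y⁆ + ⁅x, Q a y⁆)
    (htf : ∀ a b : 𝔫, Q a b - Q b a = ⁅a, b⁆) :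
    ∀ a : 𝔫, Q a = (1 / 2 : ℝ) • LieAlgebra.ad ℝ 𝔫 a := by
  set B := killingForm ℝ 𝔫 with hBdef
  -- S a = Q a - (1/2) ad a
  set S : 𝔫 → Module.End ℝ 𝔫 := fun a => Q a - (1 / 2 : ℝ) • ad ℝ 𝔫 a with hS
  have hSder : ∀ a x y : 𝔫, S a ⁅x, y⁆ = ⁅S a x, y⁆ + ⁅x, S a y⁆ := by
    intro a x y
    simp only [hS, LinearMap.sub_apply, LinearMap.smul_apply, LieAlgebra.ad_apply,
      hder a x y, lie_jacobi]
    rw [sub_lie, lie_sub, smul_lie, lie_smul]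
    rw [show ⁅a, ⁅x, y⁆⁆ = ⁅⁅a, x⁆, y⁆ + ⁅x, ⁅a, y⁆⁆ from leibniz_lie a x y]
    rw [smul_add]; abel
  have hSsym : ∀ a b : 𝔫, S a b = S b a := by
    intro a b
    have h := htf a b
    have : S a b - S b a = 0 := by
      simp only [hS, LinearMap.sub_apply, LinearMap.smul_apply, LieAlgebra.ad_apply]
      have : Q a b - (1 / 2 : ℝ) • ⁅a, b⁆ - (Q b a - (1 / 2 : ℝ) • ⁅b, a⁆)
          = (Q a b - Q b a) - (1 / 2 : ℝ) • (⁅a, b⁆ - ⁅b, a⁆) := by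
        rw [smul_sub]; abel
      rw [this, h, show (⁅b, a⁆ : 𝔫) = -⁅a, b⁆ from by rw [← lie_skew], sub_neg_eq_add,
        ← two_smul ℝ, smul_smul]
      norm_num
    exact sub_eq_zero.mp this
  -- skew-symmetry of B in the last two arguments of T
  have hskew : ∀ a b c : 𝔫, B (S a b) c = - B (S a c) b := by
    intro a b c
    rw [deriv_killing_skew 𝔫 (S a) (hSder a) b c]
    rw [LieModule.traceForm_comm]
  -- T is zero
  have hT : ∀ a b c : 𝔫, B (S a b) c = 0 := by
    intro a b c
    have e1 : B (S a b) c = - B (S b c) a := by rw [hSsym a b, hskew b a c]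
    have e2 : B (S b c) a = - B (S c a) b := by rw [hSsym b c, hskew c b a]
    have e3 : B (S c a) b = - B (S a b) c := by rw [hSsym c a, hskew a c b]
    linarith
  have hS0 : ∀ a b : 𝔫, S a b = 0 := by
    intro a b
    by_contra h
    have := hB (S a b) h
    rw [hT a b (S a b)] at this
    exact lt_irrefl 0 this
  intro a
  ext b
  have := hS0 a b
  simp only [hS, LinearMap.sub_apply] at this
  rw [sub_eq_zero] at this
  exact this
end

section
/- Let 𝔫 be a finite-dimensional real Lie algebra of compact type of dimension n ≥ 3, regarded as the inner product space V = 𝔫 with ⟨·,·⟩ = −B and with Lie bracket ρ(a,b) = [a,b]. Then the pair γ₀(a) := (1/2)·ad(a), γ₁(a) := −(1/(8(n−1)))·⟨a,·⟩ is a connection form which is normal with respect to ρ. (This is the normal conformal Cartan connection form of the bi-invariant metric in the left-invariant trivialisation: γ_nor(a) = (1/2)ρ(a,·) − (1/(8(n−1)))a*.) -/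
open Finset

noncomputable section

variable {V : Type*} [AddCommGroup V] [Module ℝ V]

/-- `β(a,l) x := l(x) • a - ⟨a,x⟩ • l♯ + l(a) • x`, where `ip` is the inner product of `V`,
`l` a linear functional and `lSharp` its metric dual (the unique vector with
`ip lSharp x = l x` for all `x`); this realises the bracket `[a,l]` of `𝔪₋₁` with `𝔪₁`
inside `𝔰𝔬(1,n+1)`, acting on `𝔪₋₁ ≅ V`. -/
def mBracket (ip : V → V → ℝ) (a : V) (l : V → ℝ) (lSharp : V) (x : V) : V :=
  l x • a - ip a x • lSharp + l a • x

/-- The 0-curvature `κ₀(a,b) := -γ₀(ρ(a,b)) + γ₀(a)∘γ₀(b) - γ₀(b)∘γ₀(a)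
+ β(a,γ₁(b)) - β(b,γ₁(a))` of a connection form `(γ₀, γ₁)` with respect to a Lie
bracket `ρ` on `V`; here `sh a` denotes the metric dual of the functional `γ₁ a`. -/
def kappaZero (ip : V → V → ℝ) (ρ : V → V → V) (γ₀ : V → Module.End ℝ V)
    (γ₁ : V → V → ℝ) (sh : V → V) (a b x : V) : V :=
  -(γ₀ (ρ a b) x) + γ₀ a (γ₀ b x) - γ₀ b (γ₀ a x)
    + mBracket ip a (γ₁ b) (sh b) x - mBracket ip b (γ₁ a) (sh a) x

end

/-!
The bi-invariant metric `-B` makes every `ad a` skew-adjoint, which gives `γ₀(a) ∈ 𝔠𝔬(V)`, and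
`(1/2) ad` is torsion-free for `ρ = ⁅·,·⁆` by antisymmetry. By the Jacobi identity the
0-curvature is `κ₀(x,a)b = -¼ ⁅⁅x,a⁆,b⁆ + 2c⟨a,b⟩x - 2c⟨x,b⟩a` when `γ₁(a) = c⟨a,·⟩`.
Tracing over an orthonormal basis, the first term contributes `-¼ tr(ad a ∘ ad b) = ¼⟨a,b⟩`
and the others `2c(n-1)⟨a,b⟩`, so the trace vanishes exactly for `c = -1/(8(n-1))`.
-/

open LinearMap (BilinForm trace trace_eq_matrix_trace)

namespace LinearMap.BilinForm

variable {R M ι : Type*} [CommRing R] [AddCommGroup M] [Module R M] [DecidableEq ι]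
  {B : BilinForm R M} {e : Module.Basis ι R M}

lemma eq_toDual_of_orthonormal (he : ∀ i j, B (e i) (e j) = if i = j then 1 else 0) :
    B = e.toDual :=
  ext_basis e fun i j => by rw [he, e.toDual_apply]

lemma apply_basis_eq_repr (he : ∀ i j, B (e i) (e j) = if i = j then 1 else 0) (i : ι) (x : M) :
    B (e i) x = e.repr x i := by
  rw [eq_toDual_of_orthonormal he, e.toDual_apply_right]

variable [Fintype ι]

lemma sum_apply_basis_apply_basis_eq_trace
    (he : ∀ i j, B (e i) (e j) = if i = j then 1 else 0) (f : Module.End R M) :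
    ∑ i, B (e i) (f (e i)) = trace R M f := by
  rw [trace_eq_matrix_trace R e f, Matrix.trace]
  simp only [Matrix.diag, LinearMap.toMatrix_apply, apply_basis_eq_repr he]

lemma sum_apply_basis_mul_apply_basis (he : ∀ i j, B (e i) (e j) = if i = j then 1 else 0)
    (x y : M) : ∑ i, B (e i) x * B (e i) y = B x y := by
  conv_rhs => rw [← e.sum_repr x]
  simp only [map_sum, map_smul, LinearMap.sum_apply, LinearMap.smul_apply, smul_eq_mul,
    apply_basis_eq_repr he]

end LinearMap.BilinForm

section ConnectionForm

variable {L : Type*} [LieRing L] [LieAlgebra ℝ L]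

lemma kappaZero_half_ad (ip : L → L → ℝ) (hip : ∀ x y, ip x y = ip y x) (c : ℝ) (x a b : L) :
    kappaZero ip (fun x y => ⁅x, y⁆) (fun x => (1 / 2 : ℝ) • LieAlgebra.ad ℝ L x)
        (fun x y => c * ip x y) (fun x => c • x) x a b
      = (-(1 / 4) : ℝ) • ⁅⁅x, a⁆, b⁆ + (2 * c * ip a b) • x - (2 * c * ip x b) • a := by
  simp only [kappaZero, mBracket, LinearMap.smul_apply, LieAlgebra.ad_apply, lie_smul, smul_smul]
  rw [leibniz_lie x a b, hip a x]
  module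

variable {ι : Type*} [Fintype ι] [DecidableEq ι] {e : Module.Basis ι ℝ L}

lemma sum_killingForm_lie_lie_basis
    (he : ∀ i j, -killingForm ℝ L (e i) (e j) = if i = j then 1 else 0) (a b : L) :
    ∑ i, -killingForm ℝ L ⁅⁅e i, a⁆, b⁆ (e i) = killingForm ℝ L a b := by
  have htrace := BilinForm.sum_apply_basis_apply_basis_eq_trace (B := -killingForm ℝ L)
    (by simpa only [LinearMap.neg_apply] using he) (LieAlgebra.ad ℝ L a ∘ₗ LieAlgebra.ad ℝ L b)
  simp only [LinearMap.neg_apply, LinearMap.comp_apply, LieAlgebra.ad_apply,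
    ← killingForm_apply_apply] at htrace
  rw [← htrace]
  refine sum_congr rfl fun i _ => ?_
  rw [LieModule.traceForm_apply_lie_apply ℝ L L, LieModule.traceForm_apply_lie_apply ℝ L L]

lemma sum_killingForm_kappaZero_half_ad
    (he : ∀ i j, -killingForm ℝ L (e i) (e j) = if i = j then 1 else 0) (c : ℝ) (a b : L) :
    ∑ i, -killingForm ℝ L
        (kappaZero (fun x y : L => -killingForm ℝ L x y) (fun x y : L => ⁅x, y⁆)
          (fun x : L => (1 / 2 : ℝ) • LieAlgebra.ad ℝ L x)
          (fun x y : L => c * (-killingForm ℝ L x y)) (fun x : L => c • x) (e i) a b) (e i)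
      = (1 / 4 + 2 * c * (Fintype.card ι - 1)) * -killingForm ℝ L a b := by
  have he' : ∀ i j, (-killingForm ℝ L) (e i) (e j) = if i = j then 1 else 0 := by
    simpa only [LinearMap.neg_apply] using he
  have hsymm : ∀ x y : L, killingForm ℝ L x y = killingForm ℝ L y x :=
    LieModule.traceForm_comm ℝ L L
  have hcross := BilinForm.sum_apply_basis_mul_apply_basis he' b a
  simp only [LinearMap.neg_apply] at hcross
  calc _ = ∑ i, (-(1 / 4) * -killingForm ℝ L ⁅⁅e i, a⁆, b⁆ (e i)
          + 2 * c * -killingForm ℝ L a b * -killingForm ℝ L (e i) (e i)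
          - 2 * c * (-killingForm ℝ L (e i) b * -killingForm ℝ L (e i) a)) := by
        refine sum_congr rfl fun i _ => ?_
        rw [kappaZero_half_ad (fun x y : L => -killingForm ℝ L x y) (fun x y => by rw [hsymm]) c]
        simp only [map_add, map_sub, map_smul, LinearMap.add_apply, LinearMap.sub_apply,
          LinearMap.smul_apply, smul_eq_mul]
        rw [hsymm a (e i)]
        ring
    _ = _ := by
        rw [sum_sub_distrib, sum_add_distrib, ← mul_sum, ← mul_sum, ← mul_sum,
          sum_killingForm_lie_lie_basis he, hcross, hsymm b a]
        simp only [he, if_true, sum_const, card_univ, nsmul_eq_mul, mul_one]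
        ring

end ConnectionForm

theorem biinvariant_normal_cartan_connection_form_general
    (𝔫 : Type*) [LieRing 𝔫] [LieAlgebra ℝ 𝔫]
    (n : ℕ) (hn : 3 ≤ n) (e : Module.Basis (Fin n) ℝ 𝔫)
    (he : ∀ i j, -killingForm ℝ 𝔫 (e i) (e j) = if i = j then 1 else 0) :
    (∀ a : 𝔫, ∃ c : ℝ, ∀ x y : 𝔫,
        -killingForm ℝ 𝔫 ((1 / 2 : ℝ) • LieAlgebra.ad ℝ 𝔫 a x) y
          + -killingForm ℝ 𝔫 x ((1 / 2 : ℝ) • LieAlgebra.ad ℝ 𝔫 a y)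
          = c * (-killingForm ℝ 𝔫 x y)) ∧
    (∀ a b : 𝔫,
        ⁅a, b⁆ = (1 / 2 : ℝ) • LieAlgebra.ad ℝ 𝔫 a b - (1 / 2 : ℝ) • LieAlgebra.ad ℝ 𝔫 b a) ∧
    (∀ a b : 𝔫,
        ∑ i, -killingForm ℝ 𝔫
            (kappaZero (fun x y : 𝔫 => -killingForm ℝ 𝔫 x y)
              (fun x y : 𝔫 => ⁅x, y⁆)
              (fun x : 𝔫 => (1 / 2 : ℝ) • LieAlgebra.ad ℝ 𝔫 x)
              (fun x y : 𝔫 => -(1 / (8 * ((n : ℝ) - 1))) * (-killingForm ℝ 𝔫 x y))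
              (fun x : 𝔫 => -(1 / (8 * ((n : ℝ) - 1))) • x)
              (e i) a b)
            (e i) = 0) := by
  refine ⟨fun a => ⟨0, fun x y => ?_⟩, fun a b => ?_, fun a b => ?_⟩
  · simp only [LinearMap.smul_apply, LieAlgebra.ad_apply, map_smul, smul_eq_mul,
      LieModule.traceForm_apply_lie_apply' ℝ 𝔫 𝔫 a x y]
    ring
  · rw [LieAlgebra.ad_apply, LieAlgebra.ad_apply, ← lie_skew b a]
    module
  · have hn1 : (n : ℝ) - 1 ≠ 0 := by
      have : (3 : ℝ) ≤ n := by exact_mod_cast hn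
      linarith
    rw [sum_killingForm_kappaZero_half_ad he, Fintype.card_fin]
    field_simp
    ring

/-- Let `𝔫` be a finite-dimensional real Lie algebra of compact type of
dimension `n ≥ 3`, regarded as the inner product space `V = 𝔫` with `⟨x,y⟩ = -B x y`
(Killing form `B`) and with Lie bracket `ρ(a,b) = ⁅a,b⁆`.  Then the pair
`γ₀(a) := (1/2) • ad a`, `γ₁(a) := -(1/(8(n-1))) • ⟨a,·⟩` (whose metric dual is
`-(1/(8(n-1))) • a`) is a connection form — each `γ₀(a)` lies in `𝔠𝔬(V)` — which is
normal with respect to `ρ`: it is torsion-free and its 0-curvature `κ₀` satisfies the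
trace condition `∑ i, ⟨κ₀(eᵢ,a)b, eᵢ⟩ = 0` for an orthonormal basis `(eᵢ)`. -/
theorem biinvariant_normal_cartan_connection_form
    (𝔫 : Type*) [LieRing 𝔫] [LieAlgebra ℝ 𝔫] [Module.Finite ℝ 𝔫]
    (hB : ∀ x : 𝔫, x ≠ 0 → killingForm ℝ 𝔫 x x < 0)
    (n : ℕ) (hn : 3 ≤ n) (e : Module.Basis (Fin n) ℝ 𝔫)
    (he : ∀ i j, -killingForm ℝ 𝔫 (e i) (e j) = if i = j then 1 else 0) :
    (∀ a : 𝔫, ∃ c : ℝ, ∀ x y : 𝔫,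
        -killingForm ℝ 𝔫 ((1 / 2 : ℝ) • LieAlgebra.ad ℝ 𝔫 a x) y
          + -killingForm ℝ 𝔫 x ((1 / 2 : ℝ) • LieAlgebra.ad ℝ 𝔫 a y)
          = c * (-killingForm ℝ 𝔫 x y)) ∧
    (∀ a b : 𝔫,
        ⁅a, b⁆ = (1 / 2 : ℝ) • LieAlgebra.ad ℝ 𝔫 a b - (1 / 2 : ℝ) • LieAlgebra.ad ℝ 𝔫 b a) ∧
    (∀ a b : 𝔫,
        ∑ i, -killingForm ℝ 𝔫
            (kappaZero (fun x y : 𝔫 => -killingForm ℝ 𝔫 x y)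
              (fun x y : 𝔫 => ⁅x, y⁆)
              (fun x : 𝔫 => (1 / 2 : ℝ) • LieAlgebra.ad ℝ 𝔫 x)
              (fun x y : 𝔫 => -(1 / (8 * ((n : ℝ) - 1))) * (-killingForm ℝ 𝔫 x y))
              (fun x : 𝔫 => -(1 / (8 * ((n : ℝ) - 1))) • x)
              (e i) a b)
            (e i) = 0) :=
  biinvariant_normal_cartan_connection_form_general 𝔫 n hn e he
end

section
/- Let 𝔫 be a finite-dimensional real Lie algebra of compact type of dimension n ≥ 3, regarded as the inner product space V = 𝔫 with ⟨·,·⟩ = −B and with Lie bracket ρ(a,b) = [a,b]. If (γ₀,γ₁) is a connection form which is normal with respect to ρ and such that γ₀(a) is skew-adjoint for every a ∈ 𝔫, then necessarily γ₀(a) = (1/2)·ad(a) and γ₁(a) = −(1/(8(n−1)))·⟨a,·⟩ for all a ∈ 𝔫. (Uniqueness of the normal conformal Cartan connection form of the bi-invariant metric in the metric gauge.) -/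
open Finset

/-! Skew-adjointness of `γ₀ a` and torsion-freeness make the trilinear form
`⟨γ₀ a b - ½ ⁅a, b⁆, c⟩` symmetric in `(a, b)` and skew in `(b, c)`, hence zero (Koszul's argument
for the Levi-Civita connection of a bi-invariant metric). With `γ₀ = ½ ad`, the Jacobi identity and
the Casimir identity `∑ᵢ ⟨⁅eᵢ, a⁆, ⁅eᵢ, b⁆⟩ = ⟨a, b⟩` (the trace of `ad a ∘ ad b` is `B a b`) turn
normality into the linear relation
`¼ ⟨a, b⟩ + (n - 1) γ₁ a b - γ₁ b a + (tr γ₁) ⟨a, b⟩ = 0`.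
Antisymmetrising it shows that `γ₁` is symmetric, tracing it gives `tr γ₁ = -n / (8 (n - 1))`,
and since `n ≠ 2` this determines `γ₁`. -/

section OrthonormalBasis

variable {V ι : Type*} [AddCommGroup V] [Module ℝ V] [Fintype ι] [DecidableEq ι]
  {g : LinearMap.BilinForm ℝ V} {e : Module.Basis ι ℝ V}

lemma Module.Basis.repr_apply_eq_of_orthonormal
    (he : ∀ i j, g (e i) (e j) = if i = j then 1 else 0) (v : V) (j : ι) :
    e.repr v j = g v (e j) := by
  conv_rhs => rw [← e.sum_repr v]
  simp only [map_sum, map_smul, LinearMap.sum_apply, LinearMap.smul_apply, he, smul_eq_mul,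
    mul_ite, mul_one, mul_zero, sum_ite_eq', mem_univ, if_true]

lemma Module.Basis.sum_smul_eq_of_orthonormal
    (he : ∀ i j, g (e i) (e j) = if i = j then 1 else 0) (v : V) :
    ∑ i, g v (e i) • e i = v := by
  simpa only [e.repr_apply_eq_of_orthonormal he] using e.sum_repr v

lemma Module.Basis.sum_mul_apply_eq_of_orthonormal
    (he : ∀ i j, g (e i) (e j) = if i = j then 1 else 0) (l : V →ₗ[ℝ] ℝ) (v : V) :
    ∑ i, g v (e i) * l (e i) = l v := by
  conv_rhs => rw [← e.sum_smul_eq_of_orthonormal he v]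
  simp

lemma Module.Basis.separatingLeft_of_orthonormal
    (he : ∀ i j, g (e i) (e j) = if i = j then 1 else 0) : g.SeparatingLeft := by
  intro v hv
  rw [← e.sum_smul_eq_of_orthonormal he v]
  simp [hv]

lemma Module.Basis.trace_eq_sum_of_orthonormal
    (he : ∀ i j, g (e i) (e j) = if i = j then 1 else 0) (f : Module.End ℝ V) :
    LinearMap.trace ℝ V f = ∑ i, g (f (e i)) (e i) := by
  simp [LinearMap.trace_eq_matrix_trace ℝ e, Matrix.trace, LinearMap.toMatrix_apply,
    e.repr_apply_eq_of_orthonormal he]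

end OrthonormalBasis

lemma eq_zero_of_symm₁₂_of_antisymm₂₃ {α : Type*} (f : α → α → α → ℝ)
    (h₁₂ : ∀ a b c, f a b c = f b a c) (h₂₃ : ∀ a b c, f a b c = -f a c b) (a b c : α) :
    f a b c = 0 := by
  have : f a b c = -f a b c := calc
    f a b c = -f b c a := by rw [h₁₂, h₂₃]
    _ = -f c b a := by rw [h₁₂]
    _ = f c a b := by rw [h₂₃, neg_neg]
    _ = f a c b := h₁₂ ..
    _ = -f a b c := h₂₃ ..
  linarith

lemma eq_const_mul_of_relation_with_trace {V ι : Type*} [Fintype ι]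
    (g P : V → V → ℝ) (e : ι → V) (hsymm : ∀ a b, g a b = g b a) (he : ∀ i, g (e i) (e i) = 1)
    (hcard : 3 ≤ Fintype.card ι)
    (h : ∀ a b, 1 / 4 * g a b + (Fintype.card ι - 1) * P a b - P b a
      + (∑ i, P (e i) (e i)) * g a b = 0) (a b : V) :
    P a b = -(1 / (8 * ((Fintype.card ι : ℝ) - 1))) * g a b := by
  have hn : (3 : ℝ) ≤ Fintype.card ι := by exact_mod_cast hcard
  set n : ℝ := (Fintype.card ι : ℝ)
  set T := ∑ i, P (e i) (e i) with hT
  have hPsymm : ∀ a b, P a b = P b a := by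
    intro a b
    have : n * (P a b - P b a) = 0 := by
      linear_combination h a b - h b a - (1 / 4 + T) * hsymm a b
    rcases mul_eq_zero.mp this with h0 | h0 <;> linarith
  have hrel : ∀ a b, (n - 2) * P a b + (1 / 4 + T) * g a b = 0 := fun a b => by
    linear_combination h a b + hPsymm b a
  have htrace : (n - 2) * T + n * (1 / 4 + T) = 0 := by
    have := sum_eq_zero fun i (_ : i ∈ univ) => hrel (e i) (e i)
    simp only [he, mul_one, sum_add_distrib, ← mul_sum, ← hT, sum_const, card_univ,
      nsmul_eq_mul] at this
    linear_combination this
  have hscaled : (n - 2) * (8 * (n - 1) * P a b + g a b) = 0 := by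
    linear_combination 8 * (n - 1) * hrel a b - 4 * g a b * htrace
  have hn1 : n - 1 ≠ 0 := by linarith
  have hP : 8 * (n - 1) * P a b + g a b = 0 :=
    (mul_eq_zero.mp hscaled).resolve_left (by linarith)
  field_simp
  linear_combination hP

section InvariantForm

variable {L : Type*} [LieRing L] [LieAlgebra ℝ L] {g : LinearMap.BilinForm ℝ L}

lemma eq_half_lie_of_skew_of_torsionFree (hsep : g.SeparatingLeft) (hsymm : g.IsSymm)
    (hinv : g.lieInvariant L) (γ₀ : L → L → L)
    (hskew : ∀ a x y, g (γ₀ a x) y + g x (γ₀ a y) = 0)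
    (htf : ∀ a b, ⁅a, b⁆ = γ₀ a b - γ₀ b a) (a b : L) :
    γ₀ a b = (1 / 2 : ℝ) • ⁅a, b⁆ := by
  set f : L → L → L → ℝ := fun a b c => g (γ₀ a b) c - 1 / 2 * g ⁅a, b⁆ c with hf
  have h₁₂ : ∀ a b c, f a b c = f b a c := by
    intro a b c
    have h₁ : g ⁅a, b⁆ c = g (γ₀ a b) c - g (γ₀ b a) c := by
      rw [htf, map_sub, LinearMap.sub_apply]
    have h₂ : g ⁅b, a⁆ c = -g ⁅a, b⁆ c := by rw [← lie_skew, map_neg, LinearMap.neg_apply]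
    simp only [hf]
    linarith
  have h₂₃ : ∀ a b c, f a b c = -f a c b := by
    intro a b c
    have h₁ := hskew a b c
    have h₂ := hinv a b c
    rw [hsymm.eq b] at h₁ h₂
    simp only [hf]
    linarith
  refine sub_eq_zero.mp (hsep _ fun c => ?_)
  have := eq_zero_of_symm₁₂_of_antisymm₂₃ f h₁₂ h₂₃ a b c
  simp only [hf] at this
  simp only [map_sub, map_smul, LinearMap.sub_apply, LinearMap.smul_apply, smul_eq_mul]
  linarith

lemma Module.Basis.sum_lie_lie_eq_neg_killingForm {ι : Type*} [Fintype ι] [DecidableEq ι]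
    {e : Module.Basis ι ℝ L} (hsymm : g.IsSymm) (hinv : g.lieInvariant L)
    (he : ∀ i j, g (e i) (e j) = if i = j then 1 else 0) (a b : L) :
    ∑ i, g ⁅e i, a⁆ ⁅e i, b⁆ = -killingForm ℝ L a b := by
  rw [killingForm_apply_apply, e.trace_eq_sum_of_orthonormal he, ← sum_neg_distrib]
  refine sum_congr rfl fun i _ => ?_
  calc g ⁅e i, a⁆ ⁅e i, b⁆ = g ⁅a, e i⁆ ⁅b, e i⁆ := by
        rw [← lie_skew a, ← lie_skew b, map_neg, map_neg, LinearMap.neg_apply, neg_neg]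
    _ = -g (e i) ⁅a, ⁅b, e i⁆⁆ := hinv ..
    _ = _ := by rw [hsymm.eq]; rfl

lemma apply_kappaZero_half_lie_self (hsymm : g.IsSymm) (hinv : g.lieInvariant L)
    (γ₀ : L → Module.End ℝ L) (hγ₀ : ∀ a b, γ₀ a b = (1 / 2 : ℝ) • ⁅a, b⁆)
    (γ₁ : LinearMap.BilinForm ℝ L) (sh : L → L) (hsh : ∀ a x, g (sh a) x = γ₁ a x)
    (x a b : L) :
    g (kappaZero (fun x y => g x y) (fun x y => ⁅x, y⁆) γ₀ (fun x y => γ₁ x y) sh x a b) x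
      = 1 / 4 * g ⁅x, a⁆ ⁅x, b⁆ + γ₁ a b * g x x - γ₁ x b * g a x + g a b * γ₁ x x
        - γ₁ x a * g b x := by
  have hleibniz : g ⁅x, ⁅a, b⁆⁆ x - g ⁅a, ⁅x, b⁆⁆ x = g ⁅⁅x, a⁆, b⁆ x := by
    rw [← LinearMap.sub_apply, ← map_sub, sub_eq_of_eq_add (leibniz_lie x a b)]
  have hinv' : g ⁅⁅x, a⁆, b⁆ x = -g ⁅x, a⁆ ⁅x, b⁆ := by
    rw [← lie_skew ⁅x, a⁆ b, map_neg, LinearMap.neg_apply, hinv, neg_neg, ← lie_skew x b,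
      map_neg, neg_neg]
  simp only [kappaZero, mBracket, hγ₀, hsh, map_smul, lie_smul, smul_smul, map_add, map_sub,
    map_neg, LinearMap.add_apply, LinearMap.sub_apply, LinearMap.neg_apply,
    LinearMap.smul_apply, smul_eq_mul, hsymm.eq b x]
  linear_combination (1 / 4 : ℝ) * hleibniz - (1 / 4 : ℝ) * hinv'

lemma Module.Basis.sum_apply_kappaZero_half_lie {ι : Type*} [Fintype ι] [DecidableEq ι]
    {e : Module.Basis ι ℝ L} (hsymm : g.IsSymm) (hinv : g.lieInvariant L)
    (he : ∀ i j, g (e i) (e j) = if i = j then 1 else 0)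
    (γ₀ : L → Module.End ℝ L) (hγ₀ : ∀ a b, γ₀ a b = (1 / 2 : ℝ) • ⁅a, b⁆)
    (γ₁ : LinearMap.BilinForm ℝ L) (sh : L → L) (hsh : ∀ a x, g (sh a) x = γ₁ a x) (a b : L) :
    ∑ i, g (kappaZero (fun x y => g x y) (fun x y => ⁅x, y⁆) γ₀ (fun x y => γ₁ x y) sh
        (e i) a b) (e i)
      = 1 / 4 * ∑ i, g ⁅e i, a⁆ ⁅e i, b⁆ + (Fintype.card ι - 1) * γ₁ a b - γ₁ b a
        + (∑ i, γ₁ (e i) (e i)) * g a b := by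
  have hdiag : ∀ i, g (e i) (e i) = 1 := fun i => by simp [he]
  have hexpand : ∀ u v, ∑ i, γ₁ (e i) v * g u (e i) = γ₁ u v := fun u v => by
    simpa [mul_comm] using e.sum_mul_apply_eq_of_orthonormal he (γ₁.flip v) u
  simp only [apply_kappaZero_half_lie_self hsymm hinv γ₀ hγ₀ γ₁ sh hsh, hdiag, hexpand,
    sum_add_distrib, sum_sub_distrib, ← mul_sum, mul_one, sum_const, card_univ,
    nsmul_eq_mul]
  ring

end InvariantForm

theorem normal_cartan_connection_form_unique_general
    (𝔫 : Type*) [LieRing 𝔫] [LieAlgebra ℝ 𝔫]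
    (n : ℕ) (hn : 3 ≤ n) (e : Module.Basis (Fin n) ℝ 𝔫)
    (he : ∀ i j, -killingForm ℝ 𝔫 (e i) (e j) = if i = j then 1 else 0)
    (γ₀ : 𝔫 →ₗ[ℝ] Module.End ℝ 𝔫) (γ₁ : 𝔫 →ₗ[ℝ] (𝔫 →ₗ[ℝ] ℝ)) (sh : 𝔫 → 𝔫)
    (hsh : ∀ a x : 𝔫, -killingForm ℝ 𝔫 (sh a) x = γ₁ a x)
    (hskew : ∀ a x y : 𝔫,
      -killingForm ℝ 𝔫 (γ₀ a x) y + -killingForm ℝ 𝔫 x (γ₀ a y) = 0)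
    (htf : ∀ a b : 𝔫, ⁅a, b⁆ = γ₀ a b - γ₀ b a)
    (htrace : ∀ a b : 𝔫,
      ∑ i, -killingForm ℝ 𝔫
          (kappaZero (fun x y : 𝔫 => -killingForm ℝ 𝔫 x y)
            (fun x y : 𝔫 => ⁅x, y⁆)
            (fun x : 𝔫 => γ₀ x)
            (fun x y : 𝔫 => γ₁ x y)
            sh (e i) a b)
          (e i) = 0) :
    (∀ a : 𝔫, γ₀ a = (1 / 2 : ℝ) • LieAlgebra.ad ℝ 𝔫 a) ∧
    (∀ a x : 𝔫, γ₁ a x = -(1 / (8 * ((n : ℝ) - 1))) * (-killingForm ℝ 𝔫 a x)) := by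
  set g : LinearMap.BilinForm ℝ 𝔫 := -killingForm ℝ 𝔫 with hg
  have hsymm : g.IsSymm := ⟨fun x y => by simp [hg, LieModule.traceForm_comm ℝ 𝔫 𝔫 x y]⟩
  have hinv : g.lieInvariant 𝔫 := fun x y z => by
    simp [hg, LieModule.traceForm_apply_lie_apply']
  have hγ₀ := eq_half_lie_of_skew_of_torsionFree (e.separatingLeft_of_orthonormal he) hsymm
    hinv (fun a b => γ₀ a b) hskew htf
  refine ⟨fun a => LinearMap.ext fun b => by simp [hγ₀], fun a x => ?_⟩
  have hrel : ∀ a b, 1 / 4 * g a b + (Fintype.card (Fin n) - 1) * γ₁ a b - γ₁ b a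
      + (∑ i, γ₁ (e i) (e i)) * g a b = 0 := fun a b => by
    have := (e.sum_apply_kappaZero_half_lie hsymm hinv he (fun a => γ₀ a) hγ₀ γ₁ sh hsh a b).symm
      |>.trans (htrace a b)
    rwa [e.sum_lie_lie_eq_neg_killingForm hsymm hinv he] at this
  have := eq_const_mul_of_relation_with_trace (fun x y => g x y) (fun x y => γ₁ x y) e hsymm.eq
    (fun i => (he i i).trans (if_pos rfl)) (by simpa using hn) hrel a x
  rwa [Fintype.card_fin] at this

/-- Let `𝔫` be a finite-dimensional real Lie algebra of compact type of
dimension `n ≥ 3`, regarded as the inner product space `V = 𝔫` with `⟨x,y⟩ = -B x y`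
(Killing form `B`) and with Lie bracket `ρ(a,b) = ⁅a,b⁆`.  If `(γ₀, γ₁)` is a connection
form (a pair of linear maps `γ₀ : V → 𝔠𝔬(V)`, `γ₁ : V → V*`; `sh a` denotes the metric
dual of `γ₁ a`) which is normal with respect to `ρ` (torsion-free and with 0-curvature
satisfying the trace condition) and such that `γ₀ a` is skew-adjoint for every `a`, then
necessarily `γ₀ a = (1/2) • ad a` and `γ₁ a = -(1/(8(n-1))) • ⟨a,·⟩` for all `a ∈ 𝔫`. -/
theorem normal_cartan_connection_form_unique
    (𝔫 : Type*) [LieRing 𝔫] [LieAlgebra ℝ 𝔫] [Module.Finite ℝ 𝔫]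
    (hB : ∀ x : 𝔫, x ≠ 0 → killingForm ℝ 𝔫 x x < 0)
    (n : ℕ) (hn : 3 ≤ n) (e : Module.Basis (Fin n) ℝ 𝔫)
    (he : ∀ i j, -killingForm ℝ 𝔫 (e i) (e j) = if i = j then 1 else 0)
    (γ₀ : 𝔫 →ₗ[ℝ] Module.End ℝ 𝔫) (γ₁ : 𝔫 →ₗ[ℝ] (𝔫 →ₗ[ℝ] ℝ)) (sh : 𝔫 → 𝔫)
    (hsh : ∀ a x : 𝔫, -killingForm ℝ 𝔫 (sh a) x = γ₁ a x)
    (hskew : ∀ a x y : 𝔫,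
      -killingForm ℝ 𝔫 (γ₀ a x) y + -killingForm ℝ 𝔫 x (γ₀ a y) = 0)
    (htf : ∀ a b : 𝔫, ⁅a, b⁆ = γ₀ a b - γ₀ b a)
    (htrace : ∀ a b : 𝔫,
      ∑ i, -killingForm ℝ 𝔫
          (kappaZero (fun x y : 𝔫 => -killingForm ℝ 𝔫 x y)
            (fun x y : 𝔫 => ⁅x, y⁆)
            (fun x : 𝔫 => γ₀ x)
            (fun x y : 𝔫 => γ₁ x y)
            sh (e i) a b)
          (e i) = 0) :
    (∀ a : 𝔫, γ₀ a = (1 / 2 : ℝ) • LieAlgebra.ad ℝ 𝔫 a) ∧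
    (∀ a x : 𝔫, γ₁ a x = -(1 / (8 * ((n : ℝ) - 1))) * (-killingForm ℝ 𝔫 a x)) :=
  normal_cartan_connection_form_unique_general 𝔫 n hn e he γ₀ γ₁ sh hsh hskew htf htrace
end

section
/- Let (V,⟨·,·⟩) be an n-dimensional real inner product space with n ≥ 3 and let (e₁,…,e_n) be an orthonormal basis. If a bilinear form T : V × V → ℝ satisfies (n−1)·T(a,b) − T(b,a) + ⟨a,b⟩·(Σ_{i=1}^{n} T(e_i,e_i)) = 0 for all a,b ∈ V, then T = 0. (This expression equals Σ_i ([e_i,γ₁(a)] + [γ₁(e_i),a])(b)(e_i*) for γ₁ : V → V* with T(x,y) = γ₁(x)(y), computed in 𝔰𝔬(1,n+1); hence the 1-part γ₁ of a normal connection form with prescribed 0-part γ₀ is uniquely determined.) -/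
open RealInnerProductSpace Finset

/-- Let `(V, ⟪·,·⟫)` be an `n`-dimensional real inner product space,
`n ≥ 3`, with orthonormal basis `(e₁, …, eₙ)`.  If a bilinear form `T : V × V → ℝ`
satisfies `(n-1) • T(a,b) - T(b,a) + ⟪a,b⟫ • (∑ i, T(eᵢ,eᵢ)) = 0` for all `a b ∈ V`,
then `T = 0`. -/
theorem trace_equation_forces_bilinear_form_zero
    (V : Type*) [NormedAddCommGroup V] [InnerProductSpace ℝ V] [FiniteDimensional ℝ V]
    (n : ℕ) (hn : 3 ≤ n) (hdim : Module.finrank ℝ V = n)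
    (e : OrthonormalBasis (Fin n) ℝ V)
    (T : V →ₗ[ℝ] V →ₗ[ℝ] ℝ)
    (hT : ∀ a b : V,
      ((n : ℝ) - 1) * T a b - T b a + ⟪a, b⟫ * (∑ i, T (e i) (e i)) = 0) :
    T = 0 := by
  set τ : ℝ := ∑ i, T (e i) (e i) with hτ
  have hnR : (3:ℝ) ≤ (n:ℝ) := by exact_mod_cast hn
  have hn0 : (n:ℝ) ≠ 0 := by linarith
  have hn2 : (n:ℝ) - 2 ≠ 0 := by linarith
  -- symmetry
  have hsym : ∀ a b : V, T a b = T b a := by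
    intro a b
    have h1 := hT a b
    have h2 := hT b a
    rw [real_inner_comm] at h2
    have : (n:ℝ) * (T a b - T b a) = 0 := by ring_nf; ring_nf at h1 h2; linarith
    have := mul_eq_zero.mp this
    rcases this with h | h
    · exact absurd h hn0
    · linarith
  have key : ∀ a b : V, ((n:ℝ) - 2) * T a b + ⟪a, b⟫ * τ = 0 := by
    intro a b
    have h1 := hT a b
    rw [hsym b a] at h1
    linarith [h1]
  have htr : ∀ i : Fin n, ((n:ℝ) - 2) * T (e i) (e i) + τ = 0 := by
    intro i
    have h := key (e i) (e i)
    have h2 : ⟪e i, e i⟫ = 1 := by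
      simpa using orthonormal_iff_ite.mp e.orthonormal i i
    rw [h2, one_mul] at h
    exact h
  have hsum : ((n:ℝ) - 2) * τ + (n:ℝ) * τ = 0 := by
    have h : ∑ i : Fin n, (((n:ℝ) - 2) * T (e i) (e i) + τ) = 0 := by
      simp [htr]
    rw [Finset.sum_add_distrib, ← Finset.mul_sum, ← hτ, Finset.sum_const,
      Finset.card_univ, Fintype.card_fin, nsmul_eq_mul] at h
    linarith [h]
  have hτ0 : τ = 0 := by
    have : ((2:ℝ) * n - 2) * τ = 0 := by linarith [hsum]
    rcases mul_eq_zero.mp this with h | h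
    · linarith
    · exact h
  ext a b
  have := key a b
  rw [hτ0, mul_zero, add_zero] at this
  have := mul_eq_zero.mp this
  rcases this with h | h
  · exact absurd h hn2
  · simpa using h
end

section
/- Let 𝔫 be a finite-dimensional real Lie algebra of compact type of dimension n ≥ 3. Then the Weyl operator vanishes identically, i.e. W(a,b)x = 0 for all a,b,x ∈ 𝔫, if and only if 𝔫 is isomorphic as a real Lie algebra to 𝔰𝔲(2), equivalently to ℝ³ equipped with the cross-product bracket. (The normal conformal Cartan connection of the bi-invariant metric is flat if and only if 𝔫 ≅ 𝔰𝔲(2).) -/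
/-!
Writing `κ` for the Killing form, `W = 0` says `(n - 1) • ⁅⁅p, q⁆, r⁆ = κ q r • p - κ p r • q`.
For `κ`-orthogonal anisotropic `a, b` and `z = ⁅a, b⁆`, the number `κ z z` can be computed twice:
by invariance, `(n - 1) κ z z = κ a ((n - 1) • ⁅b, z⁆) = -κ a a κ b b`; and as the trace of
`ad z ∘ ad z`, which the identity makes a sum of two rank-one maps, `(n - 1)² κ z z =
-2 κ a a κ b b`. Hence `n = 3`. Normalising `κ a a = κ b b = -2`, the identity then says that
`a, b, ⁅a, b⁆` is a basis with the brackets of the standard basis of `(ℝ³, ×)`.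
Conversely, the Killing form of `(ℝ³, ×)` is `-2` times the dot product, and `W = 0` becomes the
expansion `(u × v) × w = (u ⬝ w) v - (v ⬝ w) u`.
-/

open LinearMap Module LieAlgebra

lemma neg_quarter_smul_add_eq_zero_iff {K V : Type*} [Field K] [CharZero K] [AddCommGroup V]
    [Module K V] {c : K} (hc : c ≠ 0) (z w : V) :
    (-(1 / 4 : K)) • z + (1 / (4 * c)) • w = 0 ↔ c • z = w := by
  have h : (-(1 / 4 : K)) • z + (1 / (4 * c)) • w = (1 / (4 * c)) • (w - c • z) := by
    match_scalars <;> field_simp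
  rw [h, smul_eq_zero, sub_eq_zero]
  simp [hc, eq_comm]

namespace LinearMap.BilinForm

variable {V : Type*} [AddCommGroup V] [Module ℝ V]

lemma exists_smul_apply_smul_self_eq (B : LinearMap.BilinForm ℝ V) {x : V} (hx : B x x < 0) {t : ℝ}
    (ht : t < 0) : ∃ s : ℝ, B (s • x) (s • x) = t := by
  refine ⟨√(t / B x x), ?_⟩
  rw [map_smul, map_smul, smul_apply, smul_eq_mul, smul_eq_mul, ← mul_assoc,
    Real.mul_self_sqrt (div_nonneg_of_nonpos ht.le hx.le), div_mul_cancel₀ _ hx.ne]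

lemma exists_orthogonal_pair_apply_self_eq [FiniteDimensional ℝ V] {B : LinearMap.BilinForm ℝ V}
    (hB : LinearMap.IsSymm B) (hneg : ∀ x, x ≠ 0 → B x x < 0) (hV : 2 ≤ finrank ℝ V) {t : ℝ}
    (ht : t < 0) : ∃ a b : V, B a a = t ∧ B b b = t ∧ B a b = 0 := by
  obtain ⟨v, hv⟩ := exists_orthogonal_basis hB
  have hneg' (i : Fin (finrank ℝ V)) : B (v i) (v i) < 0 := hneg _ (v.ne_zero i)
  let i : Fin (finrank ℝ V) := ⟨0, by omega⟩
  let j : Fin (finrank ℝ V) := ⟨1, by omega⟩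
  obtain ⟨s, hs⟩ := B.exists_smul_apply_smul_self_eq (hneg' i) ht
  obtain ⟨s', hs'⟩ := B.exists_smul_apply_smul_self_eq (hneg' j) ht
  refine ⟨s • v i, s' • v j, hs, hs', ?_⟩
  rw [map_smul, map_smul, smul_apply, hv (by simp [i, j] : i ≠ j), smul_zero, smul_zero]

end LinearMap.BilinForm

section KillingForm

variable {R L : Type*} [CommRing R] [LieRing L] [LieAlgebra R L]

lemma killingForm_lie_apply_left (a b : L) : killingForm R L ⁅a, b⁆ a = 0 := by
  rw [← lie_skew, map_neg, LinearMap.neg_apply, LieModule.traceForm_apply_lie_apply, lie_self,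
    map_zero, neg_zero]

lemma killingForm_lie_apply_right (a b : L) : killingForm R L ⁅a, b⁆ b = 0 := by
  rw [LieModule.traceForm_apply_lie_apply, lie_self, map_zero]

end KillingForm

/-! In this section `hR` is the vanishing of the Weyl operator with `c = n - 1`. -/

section WeylFlat

variable {K L : Type*} [Field K] [LieRing L] [LieAlgebra K L] {c : K}

local notation "κ" => killingForm K L

lemma mul_killingForm_lie_lie_self
    (hR : ∀ p q r : L, c • ⁅⁅p, q⁆, r⁆ = κ q r • p - κ p r • q) {a b : L} (hab : κ a b = 0) :
    c * κ ⁅a, b⁆ ⁅a, b⁆ = -(κ a a * κ b b) := by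
  have hbz : c • ⁅b, ⁅a, b⁆⁆ = -(κ b b • a) := by
    rw [← lie_skew, smul_neg, hR, hab, zero_smul, sub_zero]
  rw [LieModule.traceForm_apply_lie_apply, ← smul_eq_mul, ← map_smul, hbz, map_neg, map_smul,
    smul_eq_mul, mul_comm]

lemma sq_mul_killingForm_lie_lie_self [Module.Finite K L]
    (hR : ∀ p q r : L, c • ⁅⁅p, q⁆, r⁆ = κ q r • p - κ p r • q) {a b : L} (hab : κ a b = 0) :
    c ^ 2 * κ ⁅a, b⁆ ⁅a, b⁆ = -2 * (κ a a * κ b b) := by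
  have hba : κ b a = 0 := by rw [LieModule.traceForm_comm, hab]
  have hop : c ^ 2 • (ad K L ⁅a, b⁆ ∘ₗ ad K L ⁅a, b⁆)
      = -(κ a a • (κ b).smulRight b + κ b b • (κ a).smulRight a) := by
    ext y
    calc c ^ 2 • ⁅⁅a, b⁆, ⁅⁅a, b⁆, y⁆⁆ = c • ⁅⁅a, b⁆, c • ⁅⁅a, b⁆, y⁆⁆ := by
          rw [lie_smul, smul_smul, sq]
      _ = κ b y • c • ⁅⁅a, b⁆, a⁆ - κ a y • c • ⁅⁅a, b⁆, b⁆ := by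
          rw [hR a b y, lie_sub, lie_smul, lie_smul, smul_sub, smul_comm c, smul_comm c]
      _ = _ := by
          rw [hR a b a, hR a b b, hab, hba]
          simp only [LinearMap.neg_apply, LinearMap.add_apply, LinearMap.smul_apply,
            smulRight_apply]
          module
  have htr := congr(trace K L $hop)
  simp only [map_smul, map_neg, map_add, trace_smulRight, smul_eq_mul] at htr
  rw [killingForm_apply_apply, htr]
  ring

lemma eq_two_of_lie_lie_eq [Module.Finite K L]
    (hR : ∀ p q r : L, c • ⁅⁅p, q⁆, r⁆ = κ q r • p - κ p r • q) {a b : L} (hab : κ a b = 0)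
    (ha : κ a a ≠ 0) (hb : κ b b ≠ 0) : c = 2 := by
  have h := sq_mul_killingForm_lie_lie_self hR hab
  rw [sq, mul_assoc, mul_killingForm_lie_lie_self hR hab] at h
  exact mul_right_cancel₀ (neg_ne_zero.mpr (mul_ne_zero ha hb)) (by linear_combination h)

lemma exists_basis_lie_eq_of_lie_lie_eq [NeZero (2 : K)] [Module.Finite K L]
    (h3 : finrank K L = 3) (hR : ∀ p q r : L, (2 : K) • ⁅⁅p, q⁆, r⁆ = κ q r • p - κ p r • q)
    {a b : L} (ha : κ a a = -2) (hb : κ b b = -2) (hab : κ a b = 0) :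
    ∃ e : Basis (Fin 3) K L, ⁅e 0, e 1⁆ = e 2 ∧ ⁅e 1, e 2⁆ = e 0 ∧ ⁅e 2, e 0⁆ = e 1 := by
  have hba : κ b a = 0 := by rw [LieModule.traceForm_comm, hab]
  have hza : ⁅⁅a, b⁆, a⁆ = b := smul_right_injective L (two_ne_zero (α := K)) <| by
    dsimp only
    rw [hR, hba, ha]
    module
  have hbz : ⁅b, ⁅a, b⁆⁆ = a := smul_right_injective L (two_ne_zero (α := K)) <| by
    dsimp only
    rw [← lie_skew, smul_neg, hR, hb, hab]
    module
  have hzz : κ ⁅a, b⁆ ⁅a, b⁆ = -2 := by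
    have h := mul_killingForm_lie_lie_self hR hab
    rw [ha, hb] at h
    exact mul_left_cancel₀ (two_ne_zero (α := K)) (by linear_combination h)
  let v : Fin 3 → L := ![a, b, ⁅a, b⁆]
  have hv : LinearIndependent K v := by
    refine BilinForm.linearIndependent_of_iIsOrtho (B := κ) ?_ ?_
    · have hκaz : κ a ⁅a, b⁆ = 0 := by
        rw [LieModule.traceForm_comm, killingForm_lie_apply_left]
      have hκbz : κ b ⁅a, b⁆ = 0 := by
        rw [LieModule.traceForm_comm, killingForm_lie_apply_right]
      intro i j hij
      fin_cases i <;> fin_cases j <;>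
        simp_all [v, Function.onFun, killingForm_lie_apply_left, killingForm_lie_apply_right]
    · intro i
      fin_cases i <;> simp [v, ha, hb, hzz, two_ne_zero]
  let e := basisOfLinearIndependentOfCardEqFinrank hv (by simp [h3])
  have he : ⇑e = v := coe_basisOfLinearIndependentOfCardEqFinrank _ _
  exact ⟨e, by simp [he, v, hza, hbz]⟩

end WeylFlat

section CrossProduct

variable {R : Type*} [CommRing R]

lemma trace_crossProduct_comp_crossProduct (u v : Fin 3 → R) :
    trace R (Fin 3 → R) (crossProduct u ∘ₗ crossProduct v) = -2 * (u ⬝ᵥ v) := by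
  rw [trace_eq_matrix_trace R (Pi.basisFun R (Fin 3))]
  simp [Matrix.trace, cross_apply, Fin.sum_univ_three, dotProduct]
  ring

lemma killingForm_eq_of_equiv_crossProduct {L : Type*} [LieRing L] [LieAlgebra R L]
    [Module.Free R L] [Module.Finite R L] (e : L ≃ₗ[R] (Fin 3 → R))
    (he : ∀ x y, e ⁅x, y⁆ = crossProduct (e x) (e y)) (x y : L) :
    killingForm R L x y = -2 * (e x ⬝ᵥ e y) := by
  have had (z : L) : ad R L z = e.symm.conj (crossProduct (e z)) := by
    ext w
    simp [LinearEquiv.conj_apply, ← he]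
  rw [killingForm_apply_apply, had, had, ← LinearEquiv.conj_comp, LinearMap.trace_conj',
    trace_crossProduct_comp_crossProduct]

lemma Module.Basis.equivFun_lie_eq_crossProduct {L : Type*} [LieRing L] [LieAlgebra R L]
    (b : Basis (Fin 3) R L) (h01 : ⁅b 0, b 1⁆ = b 2) (h12 : ⁅b 1, b 2⁆ = b 0)
    (h20 : ⁅b 2, b 0⁆ = b 1) (x y : L) :
    b.equivFun ⁅x, y⁆ = crossProduct (b.equivFun x) (b.equivFun y) := by
  have h10 : ⁅b 1, b 0⁆ = -b 2 := by rw [← lie_skew, h01]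
  have h21 : ⁅b 2, b 1⁆ = -b 0 := by rw [← lie_skew, h12]
  have h02 : ⁅b 0, b 2⁆ = -b 1 := by rw [← lie_skew, h20]
  have hbil : (LieModule.toEnd R L L : L →ₗ[R] Module.End R L).compr₂ b.equivFun.toLinearMap
      = crossProduct.compl₁₂ b.equivFun.toLinearMap b.equivFun.toLinearMap := by
    refine b.ext fun i ↦ b.ext fun j ↦ ?_
    ext k
    fin_cases i <;> fin_cases j <;> fin_cases k <;>
      simp [h01, h12, h20, h10, h21, h02, cross_apply]
  exact congr($hbil x y)

end CrossProduct

/-- Let `𝔫` be a finite-dimensional real Lie algebra of compact type of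
dimension `n ≥ 3`.  The Weyl operator
`W(a,b)x := -(1/4) • ⁅⁅a,b⁆,x⁆ + (1/(4(n-1))) • (⟨a,x⟩ • b - ⟨b,x⟩ • a)` (with
`⟨x,y⟩ = -B x y`) of the bi-invariant metric vanishes identically if and only if `𝔫` is
isomorphic as a real Lie algebra to `𝔰𝔲(2)`, equivalently to `ℝ³` with the cross-product
bracket. -/
theorem weyl_operator_vanishes_iff_su2
    (𝔫 : Type*) [LieRing 𝔫] [LieAlgebra ℝ 𝔫] [Module.Finite ℝ 𝔫]
    (hB : ∀ x : 𝔫, x ≠ 0 → killingForm ℝ 𝔫 x x < 0)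
    (hn : 3 ≤ Module.finrank ℝ 𝔫) :
    (∀ a b x : 𝔫,
        (-(1 / 4 : ℝ)) • ⁅⁅a, b⁆, x⁆
          + (1 / (4 * ((Module.finrank ℝ 𝔫 : ℝ) - 1))) •
              ((-killingForm ℝ 𝔫 a x) • b - (-killingForm ℝ 𝔫 b x) • a) = 0)
      ↔ ∃ e : 𝔫 ≃ₗ[ℝ] (Fin 3 → ℝ), ∀ x y : 𝔫, e ⁅x, y⁆ = crossProduct (e x) (e y) := by
  set N := finrank ℝ 𝔫
  have hN1 : (N : ℝ) - 1 ≠ 0 := by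
    have : (3 : ℝ) ≤ N := by exact_mod_cast hn
    linarith
  simp only [neg_quarter_smul_add_eq_zero_iff hN1]
  simp only [neg_smul, sub_neg_eq_add, neg_add_eq_sub]
  constructor
  · intro hR
    obtain ⟨a, b, ha, hb, hab⟩ := BilinForm.exists_orthogonal_pair_apply_self_eq
      (LieModule.traceForm_isSymm ℝ 𝔫 𝔫) hB (by omega) (t := -2) (by norm_num)
    have hc : (N : ℝ) - 1 = 2 :=
      eq_two_of_lie_lie_eq hR hab (by rw [ha]; norm_num) (by rw [hb]; norm_num)
    have h3 : N = 3 := by exact_mod_cast (by linarith : (N : ℝ) = 3)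
    rw [hc] at hR
    obtain ⟨e, h01, h12, h20⟩ := exists_basis_lie_eq_of_lie_lie_eq h3 hR ha hb hab
    exact ⟨e.equivFun, e.equivFun_lie_eq_crossProduct h01 h12 h20⟩
  · rintro ⟨e, he⟩ a b x
    have h3 : N = 3 := by simpa using e.finrank_eq
    apply e.injective
    simp only [map_smul, map_sub, he, killingForm_eq_of_equiv_crossProduct e he,
      cross_cross_eq_smul_sub_smul, h3]
    module
end
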